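/- There exists a quasi-uniform random vector (X_1, X_2, X_3) with finite alphabets whose entropy vector h satisfies all of the following: (i) h is a nonnegative linear combination of e_1, e_2, e_3, e_{123'}; (ii) h is not a nonnegative linear combination of any proper subset of {e_1, e_2, e_3, e_{123'}}; and (iii) there is no choice of λ_1, λ_2, λ_3 ≥ 0 and positive integer m with h = λ_1·e_1 + λ_2·e_2 + λ_3·e_3 + (log₂ m)·e_{123'}. -/

import Mathlib

open Finset

/-- Probability that the discrete random variable `X` (on finite sample space `Fin N`
with probability mass function `p`) takes the value `a`. -/
noncomputable def pr {N : ℕ} (p : Fin N → ℝ) {A : Type} [DecidableEq A]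
    (X : Fin N → A) (a : A) : ℝ :=
  ∑ ω, if X ω = a then p ω else 0

/-- Base-2 Shannon entropy of the random variable `X` under the pmf `p`. -/
noncomputable def ent {N : ℕ} (p : Fin N → ℝ) {A : Type} [Fintype A] [DecidableEq A]
    (X : Fin N → A) : ℝ :=
  -∑ a, pr p X a * Real.logb 2 (pr p X a)

/-- `p` is a probability mass function. -/
def IsDist {N : ℕ} (p : Fin N → ℝ) : Prop :=
  (∀ ω, 0 ≤ p ω) ∧ ∑ ω, p ω = 1

/-- The entropy vector of three finite-alphabet random variables, with components
(H(X₁), H(X₂), H(X₃), H(X₁X₂), H(X₁X₃), H(X₂X₃), H(X₁X₂X₃)). -/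
noncomputable def entVec3 {N a₁ a₂ a₃ : ℕ} (p : Fin N → ℝ)
    (X₁ : Fin N → Fin a₁) (X₂ : Fin N → Fin a₂) (X₃ : Fin N → Fin a₃) : Fin 7 → ℝ :=
  ![ent p X₁, ent p X₂, ent p X₃,
    ent p (fun ω => (X₁ ω, X₂ ω)),
    ent p (fun ω => (X₁ ω, X₃ ω)),
    ent p (fun ω => (X₂ ω, X₃ ω)),
    ent p (fun ω => (X₁ ω, X₂ ω, X₃ ω))]

/-- `h ∈ ℝ⁷` is the entropy vector of some triple of finite-alphabet random variables. -/
def IsEntropic (h : Fin 7 → ℝ) : Prop :=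
  ∃ (N a₁ a₂ a₃ : ℕ) (p : Fin N → ℝ)
    (X₁ : Fin N → Fin a₁) (X₂ : Fin N → Fin a₂) (X₃ : Fin N → Fin a₃),
    IsDist p ∧ entVec3 p X₁ X₂ X₃ = h

noncomputable def e1 : Fin 7 → ℝ := ![1,0,0,1,1,0,1]
noncomputable def e2 : Fin 7 → ℝ := ![0,1,0,1,0,1,1]
noncomputable def e3 : Fin 7 → ℝ := ![0,0,1,0,1,1,1]
noncomputable def e12 : Fin 7 → ℝ := ![1,1,0,1,1,1,1]
noncomputable def e13 : Fin 7 → ℝ := ![1,0,1,1,1,1,1]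
noncomputable def e23 : Fin 7 → ℝ := ![0,1,1,1,1,1,1]
noncomputable def e123 : Fin 7 → ℝ := ![1,1,1,1,1,1,1]
noncomputable def e123' : Fin 7 → ℝ := ![1,1,1,2,2,2,2]

/-- The random variable `X` is quasi-uniform: there is a constant `q ∈ (0,1]` such that
every point probability is either `0` or `q`. -/
def QU {N : ℕ} (p : Fin N → ℝ) {A : Type} [DecidableEq A] (X : Fin N → A) : Prop :=
  ∃ q : ℝ, 0 < q ∧ q ≤ 1 ∧ ∀ a, pr p X a = 0 ∨ pr p X a = q

/-- The random vector (X₁,X₂,X₃) is quasi-uniform: every one of the seven nonempty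
sub-vectors is quasi-uniform. -/
def QuasiUniform3 {N a₁ a₂ a₃ : ℕ} (p : Fin N → ℝ)
    (X₁ : Fin N → Fin a₁) (X₂ : Fin N → Fin a₂) (X₃ : Fin N → Fin a₃) : Prop :=
  QU p X₁ ∧ QU p X₂ ∧ QU p X₃ ∧
  QU p (fun ω => (X₁ ω, X₂ ω)) ∧ QU p (fun ω => (X₁ ω, X₃ ω)) ∧
  QU p (fun ω => (X₂ ω, X₃ ω)) ∧ QU p (fun ω => (X₁ ω, X₂ ω, X₃ ω))

/-! Take `(A, B, W)` uniform on `ℤ/6 × ℤ/6 × ℤ/4` and `X₁ = A`, `X₂ = B`, `X₃ = A + B + W`.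
Each `Xᵢ` is uniform on 6 values, each pair on 36 values and the triple on 144 values, so
`h = (log 6, log 6, log 6, log 36, log 36, log 36, log 144) = 2 (e₁ + e₂ + e₃) + log₂ (3/2) e₁₂₃'`.
As `e₁, e₂, e₃, e₁₂₃'` are linearly independent this is the only representation of `h`, and
`log₂ (3/2)` is positive but not the logarithm of an integer. -/

section UniformSampleSpace

variable {N : ℕ} {A : Type} [DecidableEq A]

lemma sum_pr [Fintype A] (p : Fin N → ℝ) (X : Fin N → A) : ∑ a, pr p X a = ∑ ω, p ω := by
  unfold pr
  rw [Finset.sum_comm]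
  simp

lemma ent_eq_neg_logb_of_pr_eq_zero_or [Fintype A] {p : Fin N → ℝ} {X : Fin N → A} {q : ℝ}
    (hp : ∑ ω, p ω = 1) (h : ∀ a, pr p X a = 0 ∨ pr p X a = q) :
    ent p X = -Real.logb 2 q := by
  have hterm : ∀ a, pr p X a * Real.logb 2 (pr p X a) = pr p X a * Real.logb 2 q := by
    intro a
    rcases h a with h0 | hq <;> simp [*]
  simp only [ent, hterm, ← Finset.sum_mul, sum_pr, hp, one_mul]

lemma pr_uniform (X : Fin N → A) (a : A) :
    pr (fun _ => (N : ℝ)⁻¹) X a = #{ω | X ω = a} / N := by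
  rw [pr, ← Finset.sum_filter, Finset.sum_const, nsmul_eq_mul, div_eq_mul_inv]

lemma isDist_uniform (hN : 0 < N) : IsDist (fun _ : Fin N => (N : ℝ)⁻¹) :=
  ⟨fun _ => by positivity, by simp [hN.ne']⟩

variable {X : Fin N → A} {k : ℕ}

lemma pr_uniform_eq_zero_or (h : ∀ a, #{ω | X ω = a} = 0 ∨ #{ω | X ω = a} = k) (a : A) :
    pr (fun _ => (N : ℝ)⁻¹) X a = 0 ∨ pr (fun _ => (N : ℝ)⁻¹) X a = k / N := by
  rw [pr_uniform]
  rcases h a with h0 | hk <;> simp [*]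

lemma QU.of_card_fiber (hk : 0 < k) (hkN : k ≤ N)
    (h : ∀ a, #{ω | X ω = a} = 0 ∨ #{ω | X ω = a} = k) : QU (fun _ => (N : ℝ)⁻¹) X :=
  ⟨k / N, div_pos (by exact_mod_cast hk) (by exact_mod_cast hk.trans_le hkN),
    div_le_one_of_le₀ (by exact_mod_cast hkN) (Nat.cast_nonneg N),
    pr_uniform_eq_zero_or h⟩

lemma ent_uniform_of_card_fiber [Fintype A] (hk : 0 < k) (hkN : k ≤ N)
    (h : ∀ a, #{ω | X ω = a} = 0 ∨ #{ω | X ω = a} = k) :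
    ent (fun _ => (N : ℝ)⁻¹) X = Real.logb 2 (N / k) := by
  rw [ent_eq_neg_logb_of_pr_eq_zero_or (isDist_uniform (hk.trans_le hkN)).2
    (pr_uniform_eq_zero_or h), ← Real.logb_inv, inv_div]

end UniformSampleSpace

lemma card_fiber_eq_zero_or_one_of_injective {N : ℕ} {A : Type} [DecidableEq A]
    {X : Fin N → A} (hX : Function.Injective X) (a : A) :
    #{ω | X ω = a} = 0 ∨ #{ω | X ω = a} = 1 := by
  have : #{ω | X ω = a} ≤ 1 :=
    Finset.card_le_one.mpr fun _ h₁ _ h₂ => hX <| (mem_filter.1 h₁).2.trans (mem_filter.1 h₂).2.symm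
  omega

lemma comb_coeffs_unique {c₁ c₂ c₃ c₄ d₁ d₂ d₃ d₄ : ℝ}
    (h : c₁ • e1 + c₂ • e2 + c₃ • e3 + c₄ • e123' = d₁ • e1 + d₂ • e2 + d₃ • e3 + d₄ • e123') :
    c₁ = d₁ ∧ c₂ = d₂ ∧ c₃ = d₃ ∧ c₄ = d₄ := by
  have h₀ := congrFun h 0
  have h₁ := congrFun h 1
  have h₂ := congrFun h 2
  have h₆ := congrFun h 6
  simp only [e1, e2, e3, e123', Matrix.smul_cons, smul_eq_mul, mul_one, mul_zero,
    Matrix.smul_empty, Matrix.add_cons, Matrix.head_cons, add_zero, Matrix.tail_cons, zero_add,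
    Matrix.empty_add_empty, Pi.add_apply, Matrix.cons_val_zero, Matrix.cons_val_one,
    Matrix.cons_val] at h₀ h₁ h₂ h₆
  refine ⟨?_, ?_, ?_, ?_⟩ <;> linarith

lemma logb_two_pow_mul (k : ℕ) {x : ℝ} (hx : 0 < x) :
    Real.logb 2 (2 ^ k * x) = k + Real.logb 2 x := by
  rw [Real.logb_mul (by positivity) hx.ne', Real.logb_pow, Real.logb_self_eq_one one_lt_two,
    mul_one]

-- `ω = 24 a + 4 b + w` encodes `(a, b, w) ∈ Fin 6 × Fin 6 × Fin 4`.
def Y₁ (ω : Fin 144) : Fin 6 := ⟨ω / 24, by omega⟩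
def Y₂ (ω : Fin 144) : Fin 6 := ⟨ω / 4 % 6, by omega⟩
def Y₃ (ω : Fin 144) : Fin 6 := ⟨(ω / 24 + ω / 4 % 6 + ω % 4) % 6, by omega⟩

lemma Y_injective : Function.Injective fun ω => (Y₁ ω, Y₂ ω, Y₃ ω) := by
  intro ω ω' h
  simp only [Prod.mk.injEq, Y₁, Y₂, Y₃, Fin.mk.injEq] at h
  have := ω.isLt
  have := ω'.isLt
  ext
  omega

lemma card_fiber_Y₁ (a : Fin 6) : #{ω | Y₁ ω = a} = 24 := by revert a; decide
lemma card_fiber_Y₂ (a : Fin 6) : #{ω | Y₂ ω = a} = 24 := by revert a; decide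
lemma card_fiber_Y₃ (a : Fin 6) : #{ω | Y₃ ω = a} = 24 := by revert a; decide
lemma card_fiber_Y₁₂ (a : Fin 6 × Fin 6) : #{ω | (Y₁ ω, Y₂ ω) = a} = 4 := by revert a; decide
lemma card_fiber_Y₁₃ (a : Fin 6 × Fin 6) : #{ω | (Y₁ ω, Y₃ ω) = a} = 4 := by revert a; decide
lemma card_fiber_Y₂₃ (a : Fin 6 × Fin 6) : #{ω | (Y₂ ω, Y₃ ω) = a} = 4 := by revert a; decide

lemma quasiUniform3_Y : QuasiUniform3 (fun _ => ((144 : ℕ) : ℝ)⁻¹) Y₁ Y₂ Y₃ :=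
  ⟨.of_card_fiber (k := 24) (by norm_num) (by norm_num) (fun a => .inr (card_fiber_Y₁ a)),
    .of_card_fiber (k := 24) (by norm_num) (by norm_num) (fun a => .inr (card_fiber_Y₂ a)),
    .of_card_fiber (k := 24) (by norm_num) (by norm_num) (fun a => .inr (card_fiber_Y₃ a)),
    .of_card_fiber (k := 4) (by norm_num) (by norm_num) (fun a => .inr (card_fiber_Y₁₂ a)),
    .of_card_fiber (k := 4) (by norm_num) (by norm_num) (fun a => .inr (card_fiber_Y₁₃ a)),
    .of_card_fiber (k := 4) (by norm_num) (by norm_num) (fun a => .inr (card_fiber_Y₂₃ a)),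
    .of_card_fiber (k := 1) (by norm_num) (by norm_num)
      (card_fiber_eq_zero_or_one_of_injective Y_injective)⟩

lemma entVec3_Y : entVec3 (fun _ => ((144 : ℕ) : ℝ)⁻¹) Y₁ Y₂ Y₃ =
    ![Real.logb 2 6, Real.logb 2 6, Real.logb 2 6, Real.logb 2 36, Real.logb 2 36,
      Real.logb 2 36, Real.logb 2 144] := by
  rw [entVec3,
    ent_uniform_of_card_fiber (k := 24) (by norm_num) (by norm_num)
      (fun a => .inr (card_fiber_Y₁ a)),
    ent_uniform_of_card_fiber (k := 24) (by norm_num) (by norm_num)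
      (fun a => .inr (card_fiber_Y₂ a)),
    ent_uniform_of_card_fiber (k := 24) (by norm_num) (by norm_num)
      (fun a => .inr (card_fiber_Y₃ a)),
    ent_uniform_of_card_fiber (k := 4) (by norm_num) (by norm_num)
      (fun a => .inr (card_fiber_Y₁₂ a)),
    ent_uniform_of_card_fiber (k := 4) (by norm_num) (by norm_num)
      (fun a => .inr (card_fiber_Y₁₃ a)),
    ent_uniform_of_card_fiber (k := 4) (by norm_num) (by norm_num)
      (fun a => .inr (card_fiber_Y₂₃ a)),
    ent_uniform_of_card_fiber (k := 1) (by norm_num) (by norm_num)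
      (card_fiber_eq_zero_or_one_of_injective Y_injective)]
  norm_num

lemma entVec3_Y_eq_comb : entVec3 (fun _ => ((144 : ℕ) : ℝ)⁻¹) Y₁ Y₂ Y₃ =
    (2 : ℝ) • e1 + (2 : ℝ) • e2 + (2 : ℝ) • e3 + Real.logb 2 (3 / 2) • e123' := by
  have h₆ : Real.logb 2 6 = 2 + Real.logb 2 (3 / 2) := by
    rw [show (6 : ℝ) = 2 ^ 2 * (3 / 2) by norm_num, logb_two_pow_mul 2 (by norm_num)]
    norm_num
  have h₃₆ : Real.logb 2 36 = 4 + 2 * Real.logb 2 (3 / 2) := by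
    rw [show (36 : ℝ) = 2 ^ 4 * (3 / 2) ^ 2 by norm_num, logb_two_pow_mul 4 (by norm_num),
      Real.logb_pow]
    norm_num
  have h₁₄₄ : Real.logb 2 144 = 6 + 2 * Real.logb 2 (3 / 2) := by
    rw [show (144 : ℝ) = 2 ^ 6 * (3 / 2) ^ 2 by norm_num, logb_two_pow_mul 6 (by norm_num),
      Real.logb_pow]
    norm_num
  rw [entVec3_Y, h₆, h₃₆, h₁₄₄]
  funext i
  fin_cases i <;> simp [e1, e2, e3, e123'] <;> ring

/-- There is a quasi-uniform triple of finite-alphabet random variables whose entropy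
vector h is (i) a nonnegative combination of e₁,e₂,e₃,e₁₂₃'; (ii) not a nonnegative
combination of any proper subset of {e₁,e₂,e₃,e₁₂₃'}; (iii) not representable with
λ₁,λ₂,λ₃ ≥ 0 and coefficient log₂ m (m a positive integer) on e₁₂₃'. -/
theorem stmt9 :
    ∃ (N a₁ a₂ a₃ : ℕ) (p : Fin N → ℝ)
      (X₁ : Fin N → Fin a₁) (X₂ : Fin N → Fin a₂) (X₃ : Fin N → Fin a₃),
      IsDist p ∧ QuasiUniform3 p X₁ X₂ X₃ ∧
      (∃ c1 c2 c3 c4 : ℝ, 0 ≤ c1 ∧ 0 ≤ c2 ∧ 0 ≤ c3 ∧ 0 ≤ c4 ∧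
        entVec3 p X₁ X₂ X₃ = c1 • e1 + c2 • e2 + c3 • e3 + c4 • e123') ∧
      (∀ c1 c2 c3 c4 : ℝ, 0 ≤ c1 → 0 ≤ c2 → 0 ≤ c3 → 0 ≤ c4 →
        entVec3 p X₁ X₂ X₃ = c1 • e1 + c2 • e2 + c3 • e3 + c4 • e123' →
        c1 ≠ 0 ∧ c2 ≠ 0 ∧ c3 ≠ 0 ∧ c4 ≠ 0) ∧
      ¬∃ (l1 l2 l3 : ℝ) (m : ℕ), 0 ≤ l1 ∧ 0 ≤ l2 ∧ 0 ≤ l3 ∧ 0 < m ∧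
        entVec3 p X₁ X₂ X₃ =
          l1 • e1 + l2 • e2 + l3 • e3 + Real.logb 2 (m : ℝ) • e123' := by
  have hs : 0 < Real.logb 2 (3 / 2) := Real.logb_pos one_lt_two (by norm_num)
  refine ⟨144, 6, 6, 6, _, Y₁, Y₂, Y₃, isDist_uniform (by norm_num), quasiUniform3_Y,
    ⟨2, 2, 2, _, zero_le_two, zero_le_two, zero_le_two, hs.le, entVec3_Y_eq_comb⟩, ?_, ?_⟩
  · intro c1 c2 c3 c4 _ _ _ _ h
    obtain ⟨rfl, rfl, rfl, rfl⟩ := comb_coeffs_unique (h.symm.trans entVec3_Y_eq_comb)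
    exact ⟨two_ne_zero, two_ne_zero, two_ne_zero, hs.ne'⟩
  · rintro ⟨l1, l2, l3, m, -, -, -, hm, h⟩
    have hlog := (comb_coeffs_unique (h.symm.trans entVec3_Y_eq_comb)).2.2.2
    have hm' : (m : ℝ) = 3 / 2 :=
      Real.logb_injOn_pos one_lt_two (Set.mem_Ioi.2 (Nat.cast_pos.2 hm))
        (Set.mem_Ioi.2 (by norm_num)) hlog
    have h2m : 2 * m = 3 := by exact_mod_cast (by linarith : (2 * m : ℝ) = 3)
    omega
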